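/- Let h₁,…,hₙ ∈ ℝ and let x, s ∈ ℝ with s > 0 satisfy (1/n)∑ⱼ 1/((x−hⱼ)² + s) = 1. Define σ₂ = (1/n)∑ⱼ 1/((x−hⱼ)²+s)², σ₂₁ = (1/n)∑ⱼ (x−hⱼ)/((x−hⱼ)²+s)², σ₂₂ = (1/n)∑ⱼ (x−hⱼ)²/((x−hⱼ)²+s)². Then |σ₂₁| ≤ σ₂₂^{1/2}·σ₂^{1/2}, σ₂₂ ≤ 1, σ₂ ≥ 1, and consequently 2|σ₂₁|/σ₂ ≤ 2. -/
import Mathlib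


open Finset

/-- Cauchy–Schwarz chain for the contour-slope bound.  If
`(1/n)∑ⱼ 1/((x−hⱼ)²+s) = 1` with `s > 0`, then with
`σ₂, σ₂₁, σ₂₂` as defined below one has `|σ₂₁| ≤ σ₂₂^{1/2} σ₂^{1/2}`,
`σ₂₂ ≤ 1`, `σ₂ ≥ 1`, and consequently `2|σ₂₁|/σ₂ ≤ 2`. -/
theorem sigma_inequalities
    (n : ℕ) (h : Fin n → ℝ) (x s : ℝ) (hs : 0 < s)
    (hnorm : (1 / (n : ℝ)) * ∑ j, 1 / ((x - h j) ^ 2 + s) = 1) :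
    let σ₂ : ℝ := (1 / (n : ℝ)) * ∑ j, 1 / ((x - h j) ^ 2 + s) ^ 2
    let σ₂₁ : ℝ := (1 / (n : ℝ)) * ∑ j, (x - h j) / ((x - h j) ^ 2 + s) ^ 2
    let σ₂₂ : ℝ := (1 / (n : ℝ)) * ∑ j, (x - h j) ^ 2 / ((x - h j) ^ 2 + s) ^ 2
    |σ₂₁| ≤ Real.sqrt σ₂₂ * Real.sqrt σ₂ ∧ σ₂₂ ≤ 1 ∧ 1 ≤ σ₂ ∧
      2 * |σ₂₁| / σ₂ ≤ 2 := by
  intro σ₂ σ₂₁ σ₂₂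
  have hd : ∀ j : Fin n, 0 < (x - h j) ^ 2 + s := fun j => by positivity
  have hn0 : (0 : ℝ) < n := by
    rcases Nat.eq_zero_or_pos n with h0 | h0
    · exfalso; subst h0; simp at hnorm
    · exact_mod_cast h0
  have hninv : (0 : ℝ) < 1 / (n : ℝ) := by positivity
  -- σ₂ nonneg components
  have hσ₂nn : 0 ≤ σ₂ := by
    have : 0 ≤ ∑ j, 1 / ((x - h j) ^ 2 + s) ^ 2 :=
      Finset.sum_nonneg fun j _ => by positivity
    exact mul_nonneg hninv.le this
  have hσ₂₂nn : 0 ≤ σ₂₂ := by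
    have : 0 ≤ ∑ j, (x - h j) ^ 2 / ((x - h j) ^ 2 + s) ^ 2 :=
      Finset.sum_nonneg fun j _ => by positivity
    exact mul_nonneg hninv.le this
  -- Cauchy–Schwarz: σ₂₁² ≤ σ₂₂ * σ₂
  have hCSsq : σ₂₁ ^ 2 ≤ σ₂₂ * σ₂ := by
    have key := sum_mul_sq_le_sq_mul_sq Finset.univ
      (fun j : Fin n => (x - h j) / ((x - h j) ^ 2 + s))
      (fun j : Fin n => 1 / ((x - h j) ^ 2 + s))
    have e1 : ∀ j : Fin n, (x - h j) / ((x - h j) ^ 2 + s) * (1 / ((x - h j) ^ 2 + s))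
        = (x - h j) / ((x - h j) ^ 2 + s) ^ 2 := fun j => by
      rw [div_mul_div_comm, mul_one, ← sq]
    have e2 : ∀ j : Fin n, ((x - h j) / ((x - h j) ^ 2 + s)) ^ 2
        = (x - h j) ^ 2 / ((x - h j) ^ 2 + s) ^ 2 := fun j => by
      rw [div_pow]
    have e3 : ∀ j : Fin n, (1 / ((x - h j) ^ 2 + s)) ^ 2
        = 1 / ((x - h j) ^ 2 + s) ^ 2 := fun j => by
      rw [div_pow, one_pow]
    simp only [e1, e2, e3] at key
    show ((1 / (n : ℝ)) * ∑ j, (x - h j) / ((x - h j) ^ 2 + s) ^ 2) ^ 2 ≤ _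
    calc ((1 / (n : ℝ)) * ∑ j, (x - h j) / ((x - h j) ^ 2 + s) ^ 2) ^ 2
        = (1 / (n : ℝ)) ^ 2 * (∑ j, (x - h j) / ((x - h j) ^ 2 + s) ^ 2) ^ 2 := by ring
      _ ≤ (1 / (n : ℝ)) ^ 2 * ((∑ j, (x - h j) ^ 2 / ((x - h j) ^ 2 + s) ^ 2)
            * ∑ j, 1 / ((x - h j) ^ 2 + s) ^ 2) := by
          exact mul_le_mul_of_nonneg_left key (by positivity)
      _ = σ₂₂ * σ₂ := by simp only [σ₂₂, σ₂]; ring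
  have hCS : |σ₂₁| ≤ Real.sqrt σ₂₂ * Real.sqrt σ₂ := by
    have := Real.sqrt_le_sqrt hCSsq
    rwa [Real.sqrt_sq_eq_abs, Real.sqrt_mul hσ₂₂nn] at this
  -- σ₂₂ ≤ 1
  have h22 : σ₂₂ ≤ 1 := by
    rw [← hnorm]
    refine mul_le_mul_of_nonneg_left (Finset.sum_le_sum fun j _ => ?_) hninv.le
    rw [div_le_div_iff₀ (by positivity) (hd j)]
    have : (x - h j) ^ 2 ≤ (x - h j) ^ 2 + s := by linarith
    calc (x - h j) ^ 2 * ((x - h j) ^ 2 + s)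
        ≤ ((x - h j) ^ 2 + s) * ((x - h j) ^ 2 + s) :=
          mul_le_mul_of_nonneg_right this (hd j).le
      _ = 1 * ((x - h j) ^ 2 + s) ^ 2 := by ring
  -- σ₂ ≥ 1
  have h2 : 1 ≤ σ₂ := by
    have key := sum_mul_sq_le_sq_mul_sq Finset.univ
      (fun _ : Fin n => (1 : ℝ))
      (fun j : Fin n => 1 / ((x - h j) ^ 2 + s))
    simp only [one_mul, one_pow, div_pow] at key
    have h1 : (∑ j : Fin n, 1 / ((x - h j) ^ 2 + s)) = (n : ℝ) := by
      have h2' := hnorm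
      rw [one_div, inv_mul_eq_div, div_eq_one_iff_eq (ne_of_gt hn0)] at h2'
      exact h2'
    rw [h1] at key
    simp only [Finset.sum_const, Finset.card_univ, Fintype.card_fin, nsmul_eq_mul,
      mul_one] at key
    have key2 : (n : ℝ) ^ 2 ≤ (n : ℝ) * ∑ j, 1 / ((x - h j) ^ 2 + s) ^ 2 := by
      simpa using key
    show (1 : ℝ) ≤ (1 / (n : ℝ)) * ∑ j, 1 / ((x - h j) ^ 2 + s) ^ 2
    rw [one_div, inv_mul_eq_div, le_div_iff₀ hn0]
    nlinarith [key2, hn0]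
  -- final bound
  refine ⟨hCS, h22, h2, ?_⟩
  have hσ₂pos : 0 < σ₂ := lt_of_lt_of_le one_pos h2
  rw [div_le_iff₀ hσ₂pos]
  have h1 : |σ₂₁| ≤ σ₂ := by
    calc |σ₂₁| ≤ Real.sqrt σ₂₂ * Real.sqrt σ₂ := hCS
      _ ≤ Real.sqrt 1 * Real.sqrt σ₂ :=
          mul_le_mul_of_nonneg_right (Real.sqrt_le_sqrt h22) (Real.sqrt_nonneg _)
      _ = Real.sqrt σ₂ := by rw [Real.sqrt_one, one_mul]
      _ ≤ σ₂ := (Real.sqrt_le_left hσ₂nn).2 (by nlinarith)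
  linarith
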